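/- arXiv:2207.01421 — 2 statements merged into one kernel-verified Lean document; each statement's English description precedes it below -/
import Mathlib

section
/- For every L > 0 and every a ∈ ℤ', the diagonal value of the discrete Bessel kernel satisfies K^Be(a,a) = L·( J_{a+1/2}(2L) · (d/dν)J_ν(2L)|_{ν=a−1/2} − J_{a−1/2}(2L) · (d/dν)J_ν(2L)|_{ν=a+1/2} ), where the derivatives are with respect to the order ν. -/
/-!
Bessel function of the first kind of real order `ν` and argument `2L`, defined by its
absolutely convergent series, with `1/Γ` interpreted as `0` at nonpositive integers
(`Real.Gamma` vanishes there).

Half-integers `ℤ' = ℤ + 1/2` are parametrized by `ℤ`: the half-integer `a = m + 1/2`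
corresponds to `m : ℤ`; then `a - 1/2 = m`, `a + 1/2 = m + 1`, and for `l = j + 1/2 ∈ ℤ'_+`
(`j : ℕ`) one has `a + l = m + j + 1`.
-/
noncomputable def besselJ (L ν : ℝ) : ℝ :=
  ∑' j : ℕ, (-1 : ℝ) ^ j * L ^ (2 * (j : ℝ) + ν) * (Real.Gamma (ν + j + 1))⁻¹ / (Nat.factorial j)

/-!
Termwise in the series, `L (J_ν + J_{ν+2}) = (ν + 1) J_{ν+1}`. Differentiating in the order gives
`L (J'_ν + J'_{ν+2}) = J_{ν+1} + (ν + 1) J'_{ν+1}`, and together the two recurrences show that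
`S(ν) = L (J_{ν+1} J'_ν - J_ν J'_{ν+1})` satisfies `S(ν) - S(ν + 1) = J_{ν+1}²`. The sum of the
squares therefore telescopes, to `S(ν)` because `J_ν` and `J'_ν` tend to `0` as `ν → ∞`.

Differentiability in the order and the decay of `J'_ν` come from the entire extension
`s ↦ ∑ (-1)ʲ L^(2j+s) / (Γ(s+j+1) j!)`: since `|1/Γ(w+n)| ≤ |1/Γ(w)| / n!` for `Re w ≥ 1`, the
series converges locally uniformly and is `O(Lⁿ / n!)` on the disc of radius `2` about `n + 2`,
and Cauchy's estimate carries this bound over to the derivative.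
-/

open Metric Filter Topology Nat

noncomputable section

def besselTerm (L ν : ℝ) (j : ℕ) : ℝ :=
  (-1 : ℝ) ^ j * L ^ (2 * (j : ℝ) + ν) * (Real.Gamma (ν + j + 1))⁻¹ / j !

def besselTermC (L : ℝ) (j : ℕ) (s : ℂ) : ℂ :=
  (-1 : ℂ) ^ j * (L : ℂ) ^ (2 * (j : ℂ) + s) * (Complex.Gamma (s + j + 1))⁻¹ / j !

def besselJC (L : ℝ) (s : ℂ) : ℂ := ∑' j : ℕ, besselTermC L j s

end

lemma besselTermC_ofReal {L : ℝ} (hL : 0 ≤ L) (j : ℕ) (ν : ℝ) :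
    besselTermC L j ν = besselTerm L ν j := by
  simp only [besselTermC, besselTerm]
  push_cast [Complex.ofReal_cpow hL, ← Complex.Gamma_ofReal]
  rfl

lemma norm_inv_Gamma_add_nat_le {w : ℂ} (hw : 1 ≤ w.re) (n : ℕ) :
    ‖(Complex.Gamma (w + n))⁻¹‖ ≤ ‖(Complex.Gamma w)⁻¹‖ / n ! := by
  induction n with
  | zero => simp
  | succ n ih =>
    have hre : (n : ℝ) + 1 ≤ ‖w + n‖ := by
      refine le_trans ?_ (Complex.re_le_norm _)
      simp only [Complex.add_re, Complex.natCast_re]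
      linarith
    have hne : w + n ≠ 0 := norm_pos_iff.mp ((by positivity : (0 : ℝ) < n + 1).trans_le hre)
    calc ‖(Complex.Gamma (w + (n + 1 : ℕ)))⁻¹‖ = ‖w + n‖⁻¹ * ‖(Complex.Gamma (w + n))⁻¹‖ := by
          rw [Nat.cast_succ, ← add_assoc, Complex.Gamma_add_one _ hne, mul_inv, norm_mul, norm_inv]
      _ ≤ ((n : ℝ) + 1)⁻¹ * (‖(Complex.Gamma w)⁻¹‖ / n !) := by
          gcongr
      _ = ‖(Complex.Gamma w)⁻¹‖ / (n + 1) ! := by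
          rw [Nat.factorial_succ]; push_cast; field_simp

lemma besselTermC_eq {L : ℝ} (hL : L ≠ 0) (j : ℕ) (s : ℂ) :
    besselTermC L j s =
      (-1) ^ j * (L : ℂ) ^ (2 * j) * ((L : ℂ) ^ s * (Complex.Gamma (s + j + 1))⁻¹) / j ! := by
  rw [besselTermC, Complex.cpow_add _ _ (by exact_mod_cast hL), ← Nat.cast_ofNat,
    ← Nat.cast_mul, Complex.cpow_natCast]
  ring

lemma norm_besselTermC_le {L : ℝ} (hL : 0 < L) {w s : ℂ} (hw : 1 ≤ w.re) {n j : ℕ}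
    (h : s + j + 1 = w + n) :
    ‖besselTermC L j s‖ ≤ L ^ (2 * j) * ‖(L : ℂ) ^ s‖ * (‖(Complex.Gamma w)⁻¹‖ / n !) / j ! := by
  rw [besselTermC_eq hL.ne', h, norm_div, norm_mul, norm_mul, norm_mul, norm_pow, norm_neg,
    norm_one, one_pow, one_mul, Complex.norm_pow, Complex.norm_real, Real.norm_of_nonneg hL.le,
    Complex.norm_natCast, ← mul_assoc]
  gcongr
  exact norm_inv_Gamma_add_nat_le hw n

lemma differentiable_besselTermC {L : ℝ} (hL : L ≠ 0) (j : ℕ) :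
    Differentiable ℂ (besselTermC L j) := by
  have hLC : (L : ℂ) ≠ 0 := by exact_mod_cast hL
  unfold besselTermC
  refine Differentiable.div_const (Differentiable.mul ?_ ?_) _
  · exact (differentiable_const _).mul
      (((differentiable_const _).add differentiable_id).const_cpow (.inl hLC))
  · exact Complex.differentiable_one_div_Gamma.comp (by fun_prop)

lemma summable_const_mul_pow_div_factorial (C x : ℝ) :
    Summable fun k : ℕ => C * x ^ k / k ! := by
  simpa only [mul_div_assoc] using (Real.summable_pow_div_factorial x).mul_left C

lemma exists_norm_besselTermC_add_le {L : ℝ} (hL : 0 < L) (R : ℕ) :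
    ∃ C, ∀ s ∈ closedBall (0 : ℂ) R, ∀ k : ℕ,
      ‖besselTermC L (k + R) s‖ ≤ C * (L ^ 2) ^ k / k ! := by
  have hLC : (L : ℂ) ≠ 0 := by exact_mod_cast hL.ne'
  obtain ⟨B, hB⟩ := (isCompact_closedBall (0 : ℂ) R).exists_bound_of_continuousOn
    (f := fun s => (L : ℂ) ^ s * (Complex.Gamma (s + R + 1))⁻¹)
    ((continuous_id.const_cpow (.inl hLC)).mul
      (Complex.differentiable_one_div_Gamma.continuous.comp (by fun_prop))).continuousOn
  refine ⟨L ^ (2 * R) * B, fun s hs k => ?_⟩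
  have hw : 1 ≤ (s + R + 1).re := by
    have := (abs_le.1 ((Complex.abs_re_le_norm s).trans (mem_closedBall_zero_iff.1 hs))).1
    simp only [Complex.add_re, Complex.natCast_re, Complex.one_re]
    linarith
  calc ‖besselTermC L (k + R) s‖
      ≤ L ^ (2 * (k + R)) * ‖(L : ℂ) ^ s‖ * (‖(Complex.Gamma (s + R + 1))⁻¹‖ / k !) / (k + R) ! :=
        norm_besselTermC_le hL hw (by push_cast; ring)
    _ ≤ L ^ (2 * (k + R)) * ‖(L : ℂ) ^ s‖ * (‖(Complex.Gamma (s + R + 1))⁻¹‖ / k !) :=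
        div_le_self (by positivity) (by exact_mod_cast (k + R).factorial_pos)
    _ = L ^ (2 * R) * ‖(L : ℂ) ^ s * (Complex.Gamma (s + R + 1))⁻¹‖ * (L ^ 2) ^ k / k ! := by
        rw [norm_mul]; ring
    _ ≤ L ^ (2 * R) * B * (L ^ 2) ^ k / k ! := by gcongr; exact hB s hs

lemma summable_besselTermC {L : ℝ} (hL : 0 < L) (s : ℂ) : Summable fun j => besselTermC L j s := by
  obtain ⟨C, hC⟩ := exists_norm_besselTermC_add_le hL ⌈‖s‖⌉₊
  refine (summable_nat_add_iff ⌈‖s‖⌉₊).1 ?_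
  exact (summable_const_mul_pow_div_factorial C _).of_norm_bounded
    (hC s (mem_closedBall_zero_iff.2 (Nat.le_ceil _)))

lemma differentiable_besselJC {L : ℝ} (hL : 0 < L) : Differentiable ℂ (besselJC L) := by
  intro s₀
  set R := ⌈‖s₀‖⌉₊ + 1
  obtain ⟨C, hC⟩ := exists_norm_besselTermC_add_le hL R
  have hsplit : besselJC L =
      fun s => ∑ j ∈ Finset.range R, besselTermC L j s + ∑' k, besselTermC L (k + R) s :=
    funext fun s => ((summable_besselTermC hL s).sum_add_tsum_nat_add R).symm
  have htail : DifferentiableOn ℂ (fun s => ∑' k, besselTermC L (k + R) s) (ball 0 R) :=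
    Complex.differentiableOn_tsum_of_summable_norm (summable_const_mul_pow_div_factorial C _)
      (fun k => (differentiable_besselTermC hL.ne' _).differentiableOn) isOpen_ball
      (fun k s hs => hC s (ball_subset_closedBall hs) k)
  have hs₀ : s₀ ∈ ball (0 : ℂ) R := by
    rw [mem_ball_zero_iff]
    exact (Nat.le_ceil _).trans_lt (by unfold R; push_cast; linarith)
  have hhead : Differentiable ℂ fun s => ∑ j ∈ Finset.range R, besselTermC L j s :=
    Differentiable.fun_sum fun j _ => differentiable_besselTermC hL.ne' j
  rw [hsplit]
  exact (hhead.differentiableOn.add htail).differentiableAt (isOpen_ball.mem_nhds hs₀)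

lemma besselJC_ofReal {L : ℝ} (hL : 0 ≤ L) (ν : ℝ) : besselJC L ν = besselJ L ν := by
  rw [besselJC, besselJ, Complex.ofReal_tsum]
  exact tsum_congr fun j => besselTermC_ofReal hL j ν

lemma hasDerivAt_besselJ {L : ℝ} (hL : 0 < L) (ν : ℝ) :
    HasDerivAt (besselJ L) (deriv (besselJC L) ν).re ν := by
  simpa only [besselJC_ofReal hL.le, Complex.ofReal_re] using
    ((differentiable_besselJC hL) ν).hasDerivAt.real_of_complex

lemma exists_norm_besselJC_le {L : ℝ} (hL : 0 < L) :
    ∃ C, ∀ n : ℕ, ∀ s ∈ closedBall ((n : ℂ) + 2) 2, ‖besselJC L s‖ ≤ C * L ^ n / n ! := by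
  have hLC : (L : ℂ) ≠ 0 := by exact_mod_cast hL.ne'
  obtain ⟨B, hB⟩ := (isCompact_closedBall (2 : ℂ) 2).exists_bound_of_continuousOn
    (f := fun w => (L : ℂ) ^ w * (Complex.Gamma (w + 1))⁻¹)
    ((continuous_id.const_cpow (.inl hLC)).mul
      (Complex.differentiable_one_div_Gamma.continuous.comp (by fun_prop))).continuousOn
  refine ⟨B * ∑' j : ℕ, (L ^ 2) ^ j / j !, fun n s hs => ?_⟩
  set w := s - n with hw_def
  have hw : w ∈ closedBall (2 : ℂ) 2 := by
    rw [mem_closedBall_iff_norm] at hs ⊢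
    rwa [hw_def, sub_sub]
  have hre : 1 ≤ (w + 1).re := by
    have := (abs_le.1 ((Complex.abs_re_le_norm (w - 2)).trans (mem_closedBall_iff_norm.1 hw))).1
    simp only [Complex.add_re, Complex.sub_re, Complex.one_re] at this ⊢
    norm_num at this
    linarith
  have hpow : ‖(L : ℂ) ^ s‖ = L ^ n * ‖(L : ℂ) ^ w‖ := by
    rw [show s = n + w by ring, Complex.cpow_add _ _ hLC, Complex.cpow_natCast, norm_mul,
      Complex.norm_pow, Complex.norm_real, Real.norm_of_nonneg hL.le]
  have hterm : ∀ j, ‖besselTermC L j s‖ ≤ B * L ^ n / n ! * ((L ^ 2) ^ j / j !) := by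
    intro j
    calc ‖besselTermC L j s‖
        ≤ L ^ (2 * j) * ‖(L : ℂ) ^ s‖ * (‖(Complex.Gamma (w + 1))⁻¹‖ / (n + j) !) / j ! :=
          norm_besselTermC_le hL hre (by push_cast; ring)
      _ ≤ L ^ (2 * j) * ‖(L : ℂ) ^ s‖ * (‖(Complex.Gamma (w + 1))⁻¹‖ / n !) / j ! := by
          gcongr; exact Nat.le_add_right n j
      _ = ‖(L : ℂ) ^ w * (Complex.Gamma (w + 1))⁻¹‖ * L ^ n / n ! * ((L ^ 2) ^ j / j !) := by
          rw [norm_mul, hpow]; ring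
      _ ≤ B * L ^ n / n ! * ((L ^ 2) ^ j / j !) := by gcongr; exact hB w hw
  calc ‖besselJC L s‖ ≤ B * L ^ n / n ! * ∑' j : ℕ, (L ^ 2) ^ j / j ! :=
        tsum_of_norm_bounded ((Real.summable_pow_div_factorial _).hasSum.mul_left _) hterm
    _ = _ := by ring

lemma exists_tendsto_norm_besselJC_le {L : ℝ} (hL : 0 < L) :
    ∃ g : ℝ → ℝ, Tendsto g atTop (𝓝 0) ∧
      ∀ᶠ t : ℝ in atTop, ∀ s ∈ closedBall (t : ℂ) 1, ‖besselJC L s‖ ≤ g t := by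
  obtain ⟨C, hC⟩ := exists_norm_besselJC_le hL
  refine ⟨fun t => C * L ^ (⌊t⌋₊ - 2) / (⌊t⌋₊ - 2) !, ?_, ?_⟩
  · simpa only [mul_div_assoc, mul_zero, Function.comp_def] using
      ((FloorSemiring.tendsto_pow_div_factorial_atTop L).const_mul C).comp
        ((tendsto_sub_atTop_nat 2).comp tendsto_nat_floor_atTop)
  · filter_upwards [eventually_ge_atTop 2] with t ht s hs
    refine hC _ s ?_
    have h2 : 2 ≤ ⌊t⌋₊ := Nat.le_floor (by exact_mod_cast ht)
    have hfloor : (((⌊t⌋₊ - 2 : ℕ) : ℂ) + 2) = ((⌊t⌋₊ : ℝ) : ℂ) := by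
      push_cast [Nat.cast_sub h2]; ring
    have hdist : dist t (⌊t⌋₊ : ℝ) ≤ 1 := by
      rw [Real.dist_eq, abs_of_nonneg (by linarith [Nat.floor_le (by linarith : (0:ℝ) ≤ t)])]
      linarith [Nat.lt_floor_add_one t]
    rw [hfloor, mem_closedBall]
    calc dist s ((⌊t⌋₊ : ℝ) : ℂ) ≤ dist s t + dist (t : ℂ) ((⌊t⌋₊ : ℝ) : ℂ) := dist_triangle _ _ _
      _ ≤ 1 + 1 := by rw [Complex.isometry_ofReal.dist_eq]; exact add_le_add hs hdist
      _ = 2 := by norm_num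

lemma tendsto_besselJ_atTop {L : ℝ} (hL : 0 < L) : Tendsto (besselJ L) atTop (𝓝 0) := by
  obtain ⟨g, hg, hbound⟩ := exists_tendsto_norm_besselJC_le hL
  refine squeeze_zero_norm' ?_ hg
  filter_upwards [hbound] with t ht
  rw [← Complex.norm_real, ← besselJC_ofReal hL.le]
  exact ht t (mem_closedBall_self zero_le_one)

lemma tendsto_deriv_besselJ_atTop {L : ℝ} (hL : 0 < L) :
    Tendsto (deriv (besselJ L)) atTop (𝓝 0) := by
  obtain ⟨g, hg, hbound⟩ := exists_tendsto_norm_besselJC_le hL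
  refine squeeze_zero_norm' ?_ hg
  filter_upwards [hbound] with t ht
  rw [(hasDerivAt_besselJ hL t).deriv]
  refine (Complex.abs_re_le_norm _).trans ?_
  simpa using Complex.norm_deriv_le_of_forall_mem_sphere_norm_le zero_lt_one
    (differentiable_besselJC hL).diffContOnCl fun s hs => ht s (sphere_subset_closedBall hs)

-- Also at the poles, where `Real.Gamma` is `0`.
lemma inv_Gamma_eq_mul_inv_Gamma_add_one (x : ℝ) :
    (Real.Gamma x)⁻¹ = x * (Real.Gamma (x + 1))⁻¹ := by
  rcases eq_or_ne x 0 with rfl | hx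
  · simp
  · rw [Real.Gamma_add_one hx, mul_inv, ← mul_assoc, mul_inv_cancel₀ hx, one_mul]

lemma besselTerm_eq {L : ℝ} (hL : 0 < L) (ν : ℝ) (j : ℕ) :
    besselTerm L ν j = (-1) ^ j * (L ^ 2) ^ j * L ^ ν * (Real.Gamma (ν + j + 1))⁻¹ / j ! := by
  rw [besselTerm, Real.rpow_add hL, ← Nat.cast_ofNat, ← Nat.cast_mul, Real.rpow_natCast, pow_mul]
  ring

lemma besselTerm_zero_recurrence {L : ℝ} (hL : 0 < L) (ν : ℝ) :
    L * besselTerm L ν 0 = (ν + 1) * besselTerm L (ν + 1) 0 := by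
  simp only [besselTerm_eq hL, Nat.cast_zero, add_zero, Real.rpow_add_one hL.ne',
    inv_Gamma_eq_mul_inv_Gamma_add_one (ν + 1)]
  ring

lemma besselTerm_succ_recurrence {L : ℝ} (hL : 0 < L) (ν : ℝ) (j : ℕ) :
    L * (besselTerm L ν (j + 1) + besselTerm L (ν + 2) j) =
      (ν + 1) * besselTerm L (ν + 1) (j + 1) := by
  have hΓ : (Real.Gamma (ν + (j + 1 : ℕ) + 1))⁻¹ = (ν + j + 2) * (Real.Gamma (ν + j + 3))⁻¹ := by
    rw [inv_Gamma_eq_mul_inv_Gamma_add_one]; push_cast; ring_nf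
  simp only [besselTerm_eq hL, hΓ, Real.rpow_add_one hL.ne', Real.rpow_add hL ν 2,
    Real.rpow_two, Nat.factorial_succ]
  push_cast
  rw [show ν + 2 + (j : ℝ) + 1 = ν + j + 3 by ring,
    show ν + 1 + ((j : ℝ) + 1) + 1 = ν + j + 3 by ring]
  field_simp
  ring

lemma summable_besselTerm {L : ℝ} (hL : 0 < L) (ν : ℝ) : Summable (besselTerm L ν) :=
  Complex.summable_ofReal.1 <| by
    simpa only [besselTermC_ofReal hL.le] using summable_besselTermC hL ν

lemma besselJ_recurrence {L : ℝ} (hL : 0 < L) (ν : ℝ) :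
    L * (besselJ L ν + besselJ L (ν + 2)) = (ν + 1) * besselJ L (ν + 1) := by
  have hν := summable_besselTerm hL ν
  have hshift : Summable fun j => besselTerm L ν (j + 1) := (summable_nat_add_iff 1).2 hν
  change L * (∑' j, besselTerm L ν j + ∑' j, besselTerm L (ν + 2) j) =
    (ν + 1) * ∑' j, besselTerm L (ν + 1) j
  rw [hν.tsum_eq_zero_add, (summable_besselTerm hL (ν + 1)).tsum_eq_zero_add, add_assoc,
    ← hshift.tsum_add (summable_besselTerm hL (ν + 2)), mul_add, mul_add, ← tsum_mul_left,
    ← tsum_mul_left, besselTerm_zero_recurrence hL]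
  exact congrArg _ (tsum_congr (besselTerm_succ_recurrence hL ν))

lemma deriv_besselJ_recurrence {L : ℝ} (hL : 0 < L) (ν : ℝ) :
    L * (deriv (besselJ L) ν + deriv (besselJ L) (ν + 2)) =
      besselJ L (ν + 1) + (ν + 1) * deriv (besselJ L) (ν + 1) := by
  have hJ : ∀ x, HasDerivAt (besselJ L) (deriv (besselJ L) x) x :=
    fun x => (hasDerivAt_besselJ hL x).differentiableAt.hasDerivAt
  have hlhs : HasDerivAt (fun x => L * (besselJ L x + besselJ L (x + 2)))
      (L * (deriv (besselJ L) ν + deriv (besselJ L) (ν + 2))) ν :=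
    ((hJ ν).add ((hJ (ν + 2)).comp_add_const ν 2)).const_mul L
  have hrhs : HasDerivAt (fun x => (x + 1) * besselJ L (x + 1))
      (besselJ L (ν + 1) + (ν + 1) * deriv (besselJ L) (ν + 1)) ν := by
    simpa using ((hasDerivAt_id ν).add_const 1).fun_mul ((hJ (ν + 1)).comp_add_const ν 1)
  rw [funext (besselJ_recurrence hL)] at hlhs
  exact hlhs.unique hrhs

noncomputable def besselKernelDiag (L ν : ℝ) : ℝ :=
  L * (besselJ L (ν + 1) * deriv (besselJ L) ν - besselJ L ν * deriv (besselJ L) (ν + 1))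

lemma besselKernelDiag_sub_besselKernelDiag_add_one {L : ℝ} (hL : 0 < L) (ν : ℝ) :
    besselKernelDiag L ν - besselKernelDiag L (ν + 1) = besselJ L (ν + 1) ^ 2 := by
  have hJ := besselJ_recurrence hL ν
  have hD := deriv_besselJ_recurrence hL ν
  rw [besselKernelDiag, besselKernelDiag, show ν + 1 + 1 = ν + 2 by ring]
  linear_combination besselJ L (ν + 1) * hD - deriv (besselJ L) (ν + 1) * hJ

lemma tendsto_besselKernelDiag_atTop {L : ℝ} (hL : 0 < L) :
    Tendsto (besselKernelDiag L) atTop (𝓝 0) := by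
  have hJ := tendsto_besselJ_atTop hL
  have hD := tendsto_deriv_besselJ_atTop hL
  have hshift : Tendsto (· + 1 : ℝ → ℝ) atTop atTop := tendsto_atTop_add_const_right _ 1 tendsto_id
  unfold besselKernelDiag
  simpa using (((hJ.comp hshift).mul hD).sub (hJ.mul (hD.comp hshift))).const_mul L

lemma hasSum_sq_besselJ {L : ℝ} (hL : 0 < L) (ν : ℝ) :
    HasSum (fun j : ℕ => besselJ L (ν + j + 1) ^ 2) (besselKernelDiag L ν) := by
  rw [hasSum_iff_tendsto_nat_of_nonneg (fun j => sq_nonneg _)]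
  have hpartial (N : ℕ) : ∑ j ∈ Finset.range N, besselJ L (ν + j + 1) ^ 2 =
      besselKernelDiag L ν - besselKernelDiag L (ν + N) := by
    have := Finset.sum_range_sub' (fun j : ℕ => besselKernelDiag L (ν + j)) N
    simpa only [Nat.cast_zero, add_zero, Nat.cast_succ, ← add_assoc,
      besselKernelDiag_sub_besselKernelDiag_add_one hL] using this
  simp_rw [hpartial]
  simpa using tendsto_const_nhds.sub ((tendsto_besselKernelDiag_atTop hL).comp
    (tendsto_atTop_add_const_left _ ν tendsto_natCast_atTop_atTop))

/-- for `L > 0` and `a = m + 1/2 ∈ ℤ'`, the diagonal of the discrete Bessel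
kernel `K^Be(a,a) = ∑_{l∈ℤ'_+} J_{a+l}(2L)²` equals
`L (J_{a+1/2}(2L) ∂_ν J_ν(2L)|_{ν=a-1/2} - J_{a-1/2}(2L) ∂_ν J_ν(2L)|_{ν=a+1/2})`. -/
theorem discreteBesselKernel_diagonal (L : ℝ) (hL : 0 < L) (m : ℤ) :
    (∑' j : ℕ, besselJ L ((m : ℝ) + (j : ℝ) + 1) ^ 2) =
      L * (besselJ L ((m : ℝ) + 1) * deriv (besselJ L) (m : ℝ) -
        besselJ L (m : ℝ) * deriv (besselJ L) ((m : ℝ) + 1)) :=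
  (hasSum_sq_besselJ hL m).tsum_eq
end

section
/- Let σ : ℤ' → [0,1] satisfy Σ_{l<0} σ(l) < ∞ and fix s ∈ ℤ' with Π_{i=1}^∞ (1 − σ(−i−s)) > 0. For L > 0 and a, b ∈ ℤ' define f̂(a) := σ(a−s−1/2)·(J_{a−1/2}(2L), L·J_{a+1/2}(2L))ᵀ and ĝ(a) := (1 − σ(a−s−1/2)·K^Be(a,a))^{−1}·(L·J_{a+1/2}(2L), −J_{a−1/2}(2L))ᵀ, and the scalar kernel d(a,b) := ĝ(b)ᵀ f̂(a)/(a−b) for a ≠ b, d(a,a) := 0. Then there exist constants L* > 0 and c > 0 (depending on s and σ) such that for all 0 < L < L* and every square-summable r : ℤ' → ℂ², the sums (Dr)(a) := Σ_{b∈ℤ'} d(a,b)·r(b) converge absolutely for every a ∈ ℤ', the function Dr is square-summable, and ‖Dr‖_{ℓ²} ≤ c·L·‖r‖_{ℓ²}. -/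
open scoped Matrix

/-!
Half-integers `ℤ' = ℤ + 1/2` are parametrized by `ℤ`: the half-integer `a = m + 1/2`
corresponds to `m : ℤ`; `σ : ℤ' → [0,1]` is represented as `σ : ℤ → ℝ` and `s = t + 1/2` by
`t : ℤ`.  Thus `σ(a - s - 1/2)` reads `σ (m - t - 1)`, `J_{a-1/2} = J_m`, `J_{a+1/2} = J_{m+1}`,
`a - b = m - n`, and `K^Be(a,a) = ∑_{j≥0} J_{m+j+1}(2L)²`.  Functions `r : ℤ' → ℂ²` are
represented as `r : ℤ → EuclideanSpace ℂ (Fin 2)` (Euclidean norm on `ℂ²`).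
-/
noncomputable def besselJnat (L : ℝ) (n : ℕ) : ℝ :=
  ∑' j : ℕ, (-1 : ℝ) ^ j * L ^ (2 * j + n) / (Nat.factorial j * Nat.factorial (n + j))

noncomputable def besselJint (L : ℝ) (n : ℤ) : ℝ :=
  if 0 ≤ n then besselJnat L n.toNat else (-1 : ℝ) ^ (-n).toNat * besselJnat L (-n).toNat

/-- Diagonal of the discrete Bessel kernel, `K^Be(m + 1/2, m + 1/2)`. -/
noncomputable def KBeDiag (L : ℝ) (m : ℤ) : ℝ :=
  ∑' j : ℕ, besselJint L (m + j + 1) * besselJint L (m + j + 1)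

/-- `f̂(a) = σ(a-s-1/2) (J_{a-1/2}(2L), L J_{a+1/2}(2L))ᵀ` for `a = m + 1/2`. -/
noncomputable def fhat (σ : ℤ → ℝ) (L : ℝ) (t m : ℤ) : Fin 2 → ℝ :=
  ![σ (m - t - 1) * besselJint L m, σ (m - t - 1) * (L * besselJint L (m + 1))]

/-- `ĝ(a) = (1 - σ(a-s-1/2) K^Be(a,a))⁻¹ (L J_{a+1/2}(2L), -J_{a-1/2}(2L))ᵀ`
for `a = m + 1/2`. -/
noncomputable def ghat (σ : ℤ → ℝ) (L : ℝ) (t m : ℤ) : Fin 2 → ℝ :=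
  ![(1 - σ (m - t - 1) * KBeDiag L m)⁻¹ * (L * besselJint L (m + 1)),
    (1 - σ (m - t - 1) * KBeDiag L m)⁻¹ * (-besselJint L m)]

/-- The scalar kernel `d(a,b) = ĝ(b)ᵀ f̂(a)/(a-b)` for `a ≠ b`, `d(a,a) = 0`. -/
noncomputable def dker (σ : ℤ → ℝ) (L : ℝ) (t m n : ℤ) : ℝ :=
  if m = n then 0 else (ghat σ L t n ⬝ᵥ fhat σ L t m) / ((m : ℝ) - (n : ℝ))

/-!
Write `a = m + 1/2`, `b = n + 1/2`. For small `L` the Bessel functions are tiny,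
`|J_k(2L)| ≤ L^|k| / (1 - L²)`, so `K^Be(a,a) ≤ 8L²` for `m ≥ 0` and `K^Be(a,a) ≤ 1 + 8L²` for
all `m`. A convergent product of factors in `[0,1]` is at most each factor, so
`σ(a - s - 1/2) ≤ 1 - P` for `m < 0`, where `P = ∏ (1 - σ(-i-s)) > 0`. Hence once `L² ≤ P/16` all
denominators `1 - σ K^Be` are at least `P/2`, and `|d(a,b)| ≤ (16/P) L^(|m|+|n|)`. As `d` vanishes
on the diagonal, this is at most `(32L/P) 2^-|m| 2^-|n|`: a product kernel with Hilbert–Schmidt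
norm `O(L)`.
-/

theorem summable_mul_and_sq_tsum_mul_le {ι : Type*} {f g : ι → ℝ} (hf : ∀ i, 0 ≤ f i)
    (hg : ∀ i, 0 ≤ g i) (hf2 : Summable fun i => f i ^ 2) (hg2 : Summable fun i => g i ^ 2) :
    Summable (fun i => f i * g i) ∧
      (∑' i, f i * g i) ^ 2 ≤ (∑' i, f i ^ 2) * ∑' i, g i ^ 2 := by
  have h := Real.summable_and_inner_le_Lp_mul_Lq_tsum_of_nonneg .two_two hf hg
    (by simpa only [Real.rpow_two] using hf2) (by simpa only [Real.rpow_two] using hg2)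
  simp only [Real.rpow_two, ← Real.sqrt_eq_rpow] at h
  refine ⟨h.1, ?_⟩
  calc (∑' i, f i * g i) ^ 2 ≤ (√(∑' i, f i ^ 2) * √(∑' i, g i ^ 2)) ^ 2 :=
        pow_le_pow_left₀ (tsum_nonneg fun i => mul_nonneg (hf i) (hg i)) h.2 2
    _ = (∑' i, f i ^ 2) * ∑' i, g i ^ 2 := by
        rw [mul_pow, Real.sq_sqrt (tsum_nonneg fun i => sq_nonneg _),
          Real.sq_sqrt (tsum_nonneg fun i => sq_nonneg _)]

section KernelOperator

variable {ι 𝕜 E : Type*} [RCLike 𝕜] [NormedAddCommGroup E] [NormedSpace 𝕜 E]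

theorem summable_abs_mul_norm_and_sq_norm_tsum_smul_le {k : ι → ℝ} {r : ι → E}
    (hk : Summable fun n => k n ^ 2) (hr : Summable fun n => ‖r n‖ ^ 2) :
    Summable (fun n => |k n| * ‖r n‖) ∧
      ‖∑' n, (k n : 𝕜) • r n‖ ^ 2 ≤ (∑' n, k n ^ 2) * ∑' n, ‖r n‖ ^ 2 := by
  obtain ⟨hsum, hcs⟩ := summable_mul_and_sq_tsum_mul_le (fun n => abs_nonneg (k n))
    (fun n => norm_nonneg (r n)) (by simpa only [sq_abs] using hk) hr
  simp only [sq_abs] at hcs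
  refine ⟨hsum, le_trans (pow_le_pow_left₀ (norm_nonneg _) ?_ 2) hcs⟩
  exact tsum_of_norm_bounded hsum.hasSum fun n => by rw [norm_smul, RCLike.norm_ofReal]

theorem kernel_operator_bound_of_sq_le_mul {K : ι → ι → ℝ} {a b : ι → ℝ}
    (hK : ∀ m n, K m n ^ 2 ≤ a m * b n) (ha : Summable a) (hb : Summable b) {r : ι → E}
    (hr : Summable fun n => ‖r n‖ ^ 2) :
    (∀ m, Summable fun n => |K m n| * ‖r n‖) ∧
      Summable (fun m => ‖∑' n, (K m n : 𝕜) • r n‖ ^ 2) ∧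
      ∑' m, ‖∑' n, (K m n : 𝕜) • r n‖ ^ 2 ≤ (∑' m, a m) * (∑' n, b n) * ∑' n, ‖r n‖ ^ 2 := by
  have hrow : ∀ m, Summable fun n => K m n ^ 2 := fun m =>
    (hb.mul_left (a m)).of_nonneg_of_le (fun n => sq_nonneg _) (hK m)
  have hrow_le : ∀ m, ∑' n, K m n ^ 2 ≤ a m * ∑' n, b n := fun m => by
    rw [← tsum_mul_left]; exact (hrow m).tsum_le_tsum (hK m) (hb.mul_left (a m))
  have hpt : ∀ m, ‖∑' n, (K m n : 𝕜) • r n‖ ^ 2 ≤ a m * (∑' n, b n) * ∑' n, ‖r n‖ ^ 2 :=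
    fun m => (summable_abs_mul_norm_and_sq_norm_tsum_smul_le (hrow m) hr).2.trans
      (mul_le_mul_of_nonneg_right (hrow_le m) (tsum_nonneg fun n => sq_nonneg _))
  have hmaj : Summable fun m => a m * (∑' n, b n) * ∑' n, ‖r n‖ ^ 2 :=
    (ha.mul_right _).mul_right _
  have hsq : Summable fun m => ‖∑' n, (K m n : 𝕜) • r n‖ ^ 2 :=
    hmaj.of_nonneg_of_le (fun m => sq_nonneg _) hpt
  refine ⟨fun m => (summable_abs_mul_norm_and_sq_norm_tsum_smul_le (𝕜 := 𝕜) (hrow m) hr).1,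
    hsq, ?_⟩
  calc ∑' m, ‖∑' n, (K m n : 𝕜) • r n‖ ^ 2
      ≤ ∑' m, a m * (∑' n, b n) * ∑' n, ‖r n‖ ^ 2 := hsq.tsum_le_tsum hpt hmaj
    _ = (∑' m, a m) * (∑' n, b n) * ∑' n, ‖r n‖ ^ 2 := by rw [tsum_mul_right, tsum_mul_right]

end KernelOperator

/-- The finite partial products decrease, so the product converges to their infimum; in
particular it is not the junk value `1` of a non-multipliable product. -/
theorem tprod_le_of_mem_Icc {ι : Type*} {f : ι → ℝ} (hf : ∀ i, f i ∈ Set.Icc 0 1) (i : ι) :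
    ∏' j, f j ≤ f i := by
  classical
  have hbdd : BddBelow (Set.range fun s : Finset ι => ∏ j ∈ s, f j) :=
    ⟨0, by rintro _ ⟨s, rfl⟩; exact Finset.prod_nonneg fun j _ => (hf j).1⟩
  have hanti : Antitone fun s : Finset ι => ∏ j ∈ s, f j := fun s s' hss' => by
    dsimp only
    rw [← Finset.prod_sdiff hss']
    exact mul_le_of_le_one_left (Finset.prod_nonneg fun j _ => (hf j).1)
      (Finset.prod_le_one (fun j _ => (hf j).1) fun j _ => (hf j).2)
  have hprod : HasProd f (⨅ s : Finset ι, ∏ j ∈ s, f j) := tendsto_atTop_ciInf hanti hbdd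
  rw [hprod.tprod_eq]
  simpa using ciInf_le hbdd {i}

theorem hasSum_pow_natAbs {x : ℝ} (h0 : 0 ≤ x) (h1 : x < 1) :
    HasSum (fun k : ℤ => x ^ k.natAbs) ((1 + x) / (1 - x)) := by
  have hgeo := hasSum_geometric_of_lt_one h0 h1
  have hneg : HasSum (fun n : ℕ => x ^ (-((n : ℤ) + 1)).natAbs) (x * (1 - x)⁻¹) := by
    have e : ∀ n : ℕ, (-((n : ℤ) + 1)).natAbs = n + 1 := fun n => by omega
    simp only [e, pow_succ']
    exact hgeo.mul_left x
  have hpos : HasSum (fun n : ℕ => x ^ (n : ℤ).natAbs) (1 - x)⁻¹ := by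
    simpa only [Int.natAbs_natCast] using hgeo
  rw [show (1 + x) / (1 - x) = (1 - x)⁻¹ + x * (1 - x)⁻¹ by ring]
  exact HasSum.of_nat_of_neg_add_one (f := fun k : ℤ => x ^ k.natAbs) hpos hneg

section Bessel

variable {L : ℝ}

theorem abs_besselJnat_le (hL0 : 0 ≤ L) (hL1 : L < 1) (n : ℕ) :
    |besselJnat L n| ≤ L ^ n / (1 - L ^ 2) := by
  have hgeo := (hasSum_geometric_of_lt_one (sq_nonneg L) (by nlinarith)).mul_left (L ^ n)
  rw [← Real.norm_eq_abs, besselJnat, div_eq_mul_inv]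
  refine tsum_of_norm_bounded hgeo fun j => ?_
  have hfac : (1 : ℝ) ≤ j.factorial * (n + j).factorial := by
    exact_mod_cast Nat.one_le_iff_ne_zero.2 (mul_ne_zero (Nat.factorial_ne_zero j)
      (Nat.factorial_ne_zero (n + j)))
  rw [Real.norm_eq_abs, abs_div, abs_mul, abs_pow, abs_neg, abs_one, one_pow, one_mul,
    abs_of_nonneg (pow_nonneg hL0 _), abs_of_pos (by positivity)]
  calc L ^ (2 * j + n) / (j.factorial * (n + j).factorial) ≤ L ^ (2 * j + n) :=
        div_le_self (pow_nonneg hL0 _) hfac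
    _ = L ^ n * (L ^ 2) ^ j := by ring

theorem abs_besselJint_le (hL0 : 0 ≤ L) (hL1 : L < 1) (k : ℤ) :
    |besselJint L k| ≤ L ^ k.natAbs / (1 - L ^ 2) := by
  unfold besselJint
  split_ifs with hk
  · rw [show k.toNat = k.natAbs by omega]
    exact abs_besselJnat_le hL0 hL1 _
  · rw [show (-k).toNat = k.natAbs by omega, abs_mul, abs_pow, abs_neg, abs_one, one_pow,
      one_mul]
    exact abs_besselJnat_le hL0 hL1 _

theorem besselJint_mul_self_le (hL0 : 0 ≤ L) (hL1 : L < 1) (k : ℤ) :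
    besselJint L k * besselJint L k ≤ (L ^ 2) ^ k.natAbs / (1 - L ^ 2) ^ 2 := by
  rw [← abs_mul_abs_self]
  calc |besselJint L k| * |besselJint L k|
      ≤ (L ^ k.natAbs / (1 - L ^ 2)) * (L ^ k.natAbs / (1 - L ^ 2)) :=
        mul_self_le_mul_self (abs_nonneg _) (abs_besselJint_le hL0 hL1 k)
    _ = (L ^ 2) ^ k.natAbs / (1 - L ^ 2) ^ 2 := by rw [div_mul_div_comm, ← mul_pow, ← sq, ← sq]

theorem abs_besselJint_le_two_mul (hL0 : 0 ≤ L) (hL : L ≤ 1 / 2) (k : ℤ) :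
    |besselJint L k| ≤ 2 * L ^ k.natAbs := by
  refine (abs_besselJint_le hL0 (by linarith) k).trans ?_
  rw [div_le_iff₀ (by nlinarith)]
  nlinarith [mul_nonneg (pow_nonneg hL0 k.natAbs) (by nlinarith : (0 : ℝ) ≤ 1 - 2 * L ^ 2)]

theorem abs_mul_besselJint_succ_le (hL0 : 0 ≤ L) (hL : L ≤ 1 / 2) (k : ℤ) :
    |L * besselJint L (k + 1)| ≤ 2 * L ^ k.natAbs := by
  rw [abs_mul, abs_of_nonneg hL0]
  calc L * |besselJint L (k + 1)| ≤ L * (2 * L ^ (k + 1).natAbs) :=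
        mul_le_mul_of_nonneg_left (abs_besselJint_le_two_mul hL0 hL (k + 1)) hL0
    _ = 2 * L ^ ((k + 1).natAbs + 1) := by ring
    _ ≤ 2 * L ^ k.natAbs := by
        gcongr 2 * ?_
        exact pow_le_pow_of_le_one hL0 (by linarith) (by omega)

theorem KBeDiag_le (hL0 : 0 ≤ L) (hL1 : L < 1) (m : ℤ) :
    KBeDiag L m ≤ (1 + L ^ 2) / (1 - L ^ 2) ^ 3 := by
  have hq1 : L ^ 2 < 1 := by nlinarith
  set g : ℤ → ℝ := fun k => (L ^ 2) ^ k.natAbs / (1 - L ^ 2) ^ 2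
  have hg : HasSum g ((1 + L ^ 2) / (1 - L ^ 2) / (1 - L ^ 2) ^ 2) :=
    (hasSum_pow_natAbs (sq_nonneg L) hq1).div_const _
  have hi : Function.Injective fun j : ℕ => m + j + 1 := fun i j h => by simpa using h
  have hmaj : ∀ j : ℕ, besselJint L (m + j + 1) * besselJint L (m + j + 1) ≤ g (m + j + 1) :=
    fun j => besselJint_mul_self_le hL0 hL1 _
  have hgi := hg.summable.comp_injective hi
  calc KBeDiag L m ≤ ∑' j : ℕ, g (m + j + 1) :=
        (hgi.of_nonneg_of_le (fun j => mul_self_nonneg _) hmaj).tsum_le_tsum hmaj hgi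
    _ ≤ ∑' k, g k := tsum_comp_le_tsum_of_inj hg.summable (fun k => by positivity) hi
    _ = (1 + L ^ 2) / (1 - L ^ 2) ^ 3 := by
        rw [hg.tsum_eq, div_div, ← pow_succ']

theorem KBeDiag_le_of_nonneg (hL0 : 0 ≤ L) (hL1 : L < 1) {m : ℤ} (hm : 0 ≤ m) :
    KBeDiag L m ≤ L ^ 2 / (1 - L ^ 2) ^ 3 := by
  have hq1 : L ^ 2 < 1 := by nlinarith
  set g : ℕ → ℝ := fun j => L ^ 2 * (L ^ 2) ^ j / (1 - L ^ 2) ^ 2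
  have hg : HasSum g (L ^ 2 * (1 - L ^ 2)⁻¹ / (1 - L ^ 2) ^ 2) :=
    ((hasSum_geometric_of_lt_one (sq_nonneg L) hq1).mul_left _).div_const _
  have hmaj : ∀ j : ℕ, besselJint L (m + j + 1) * besselJint L (m + j + 1) ≤ g j := by
    intro j
    refine (besselJint_mul_self_le hL0 hL1 _).trans
      (div_le_div_of_nonneg_right ?_ (by positivity))
    rw [← pow_succ']
    exact pow_le_pow_of_le_one (sq_nonneg L) hq1.le (by omega)
  calc KBeDiag L m ≤ ∑' j, g j :=
        (hg.summable.of_nonneg_of_le (fun j => mul_self_nonneg _) hmaj).tsum_le_tsum hmaj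
          hg.summable
    _ = L ^ 2 / (1 - L ^ 2) ^ 3 := by
        rw [hg.tsum_eq, div_eq_mul_inv, mul_assoc, ← mul_inv, ← pow_succ', ← div_eq_mul_inv]

end Bessel

theorem half_le_one_sub_mul_KBeDiag {x P L : ℝ} {n : ℤ} (hx : x ≤ 1) (hxP : n < 0 → x ≤ 1 - P)
    (hP : P ≤ 1) (hL0 : 0 ≤ L) (hLP : L ^ 2 ≤ P / 16) : P / 2 ≤ 1 - x * KBeDiag L n := by
  have hL1 : L < 1 := by nlinarith
  have hq : L ^ 2 ≤ 1 / 16 := by linarith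
  have hK0 : 0 ≤ KBeDiag L n := tsum_nonneg fun j => mul_self_nonneg _
  have hcube : 1 - 3 * L ^ 2 ≤ (1 - L ^ 2) ^ 3 := by nlinarith [sq_nonneg L, pow_nonneg hL0 4]
  rcases lt_or_ge n 0 with hn | hn
  · have hK : KBeDiag L n ≤ 1 + 8 * L ^ 2 := by
      refine (KBeDiag_le hL0 hL1 n).trans ?_
      rw [div_le_iff₀ (pow_pos (by nlinarith) 3)]
      nlinarith [sq_nonneg L]
    nlinarith [mul_le_mul_of_nonneg_right (hxP hn) hK0,
      mul_le_mul_of_nonneg_left hK (by linarith : 0 ≤ 1 - P)]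
  · have hK : KBeDiag L n ≤ 8 * L ^ 2 := by
      refine (KBeDiag_le_of_nonneg hL0 hL1 hn).trans ?_
      rw [div_le_iff₀ (pow_pos (by nlinarith) 3)]
      nlinarith [sq_nonneg L]
    nlinarith [mul_le_mul_of_nonneg_right hx hK0]

theorem abs_ghat_dotProduct_fhat_le {σ : ℤ → ℝ} {L δ : ℝ} {t m n : ℤ}
    (hσ : |σ (m - t - 1)| ≤ 1) (hL0 : 0 ≤ L) (hL : L ≤ 1 / 2) (hδ : 0 < δ)
    (hden : δ ≤ 1 - σ (n - t - 1) * KBeDiag L n) :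
    |ghat σ L t n ⬝ᵥ fhat σ L t m| ≤ 8 / δ * L ^ (m.natAbs + n.natAbs) := by
  have e : ghat σ L t n ⬝ᵥ fhat σ L t m =
      (1 - σ (n - t - 1) * KBeDiag L n)⁻¹ * σ (m - t - 1) *
        (L * besselJint L (n + 1) * besselJint L m -
          besselJint L n * (L * besselJint L (m + 1))) := by
    simp only [dotProduct, Fin.sum_univ_two, ghat, fhat, Matrix.cons_val_zero, Matrix.cons_val_one]
    ring
  have hinv : |(1 - σ (n - t - 1) * KBeDiag L n)⁻¹| ≤ δ⁻¹ := by
    rw [abs_inv, abs_of_pos (hδ.trans_le hden)]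
    exact inv_anti₀ hδ hden
  have hJ := abs_besselJint_le_two_mul hL0 hL
  have hLJ := abs_mul_besselJint_succ_le hL0 hL
  rw [e, abs_mul, abs_mul]
  calc |(1 - σ (n - t - 1) * KBeDiag L n)⁻¹| * |σ (m - t - 1)| *
        |L * besselJint L (n + 1) * besselJint L m - besselJint L n * (L * besselJint L (m + 1))|
      ≤ δ⁻¹ * 1 *
          (2 * L ^ n.natAbs * (2 * L ^ m.natAbs) + 2 * L ^ n.natAbs * (2 * L ^ m.natAbs)) := by
        gcongr
        refine (abs_sub _ _).trans (add_le_add ?_ ?_) <;> rw [abs_mul] <;> gcongr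
        exacts [hLJ n, hJ m, hJ n, hLJ m]
    _ = 8 / δ * L ^ (m.natAbs + n.natAbs) := by ring

theorem sq_dker_le {σ : ℤ → ℝ} {L δ : ℝ} {t : ℤ} (hσ : ∀ k, |σ k| ≤ 1) (hL0 : 0 ≤ L)
    (hL : L ≤ 1 / 2) (hδ : 0 < δ) (hden : ∀ n, δ ≤ 1 - σ (n - t - 1) * KBeDiag L n) (m n : ℤ) :
    dker σ L t m n ^ 2 ≤ (16 * L / δ) ^ 2 * (1 / 4) ^ m.natAbs * (1 / 4) ^ n.natAbs := by
  by_cases hmn : m = n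
  · rw [dker, if_pos hmn, sq, zero_mul]
    positivity
  -- Off the diagonal `|m| + |n| ≥ 1`, which is where the extra factor `L ^ 2` comes from.
  obtain ⟨a, ha⟩ : ∃ a, m.natAbs + n.natAbs = a + 1 := ⟨m.natAbs + n.natAbs - 1, by omega⟩
  have hsep : (1 : ℝ) ≤ |(m : ℝ) - n| := by
    rw [← Int.cast_sub, ← Int.cast_abs]
    exact_mod_cast Int.one_le_abs (sub_ne_zero.2 hmn)
  have hd : |dker σ L t m n| ≤ 8 / δ * L ^ (a + 1) := by
    rw [dker, if_neg hmn, abs_div, ← ha]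
    exact (div_le_self (abs_nonneg _) hsep).trans
      (abs_ghat_dotProduct_fhat_le (hσ _) hL0 hL hδ (hden n))
  have hpow : (L ^ 2) ^ a ≤ (1 / 4) ^ a := by gcongr; nlinarith
  rw [mul_assoc, ← pow_add, ha, ← sq_abs]
  calc |dker σ L t m n| ^ 2 ≤ (8 / δ * L ^ (a + 1)) ^ 2 := by gcongr
    _ = (8 / δ) ^ 2 * L ^ 2 * (L ^ 2) ^ a := by ring
    _ ≤ (8 / δ) ^ 2 * L ^ 2 * (1 / 4) ^ a := by gcongr
    _ = (16 * L / δ) ^ 2 * (1 / 4) ^ (a + 1) := by ring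

theorem dker_operator_small_general (σ : ℤ → ℝ) (hσ : ∀ k : ℤ, σ k ∈ Set.Icc (0 : ℝ) 1) (t : ℤ)
    (hQ0 : 0 < ∏' i : ℕ, (1 - σ (-(i : ℤ) - t - 2))) :
    ∃ Lstar c : ℝ, 0 < Lstar ∧ 0 < c ∧
      ∀ L : ℝ, 0 < L → L < Lstar →
        ∀ r : ℤ → EuclideanSpace ℂ (Fin 2), Summable (fun b : ℤ => ‖r b‖ ^ 2) →
          (∀ m : ℤ, Summable (fun n : ℤ => |dker σ L t m n| * ‖r n‖)) ∧
          Summable (fun m : ℤ => ‖∑' n : ℤ, ((dker σ L t m n : ℂ) • r n)‖ ^ 2) ∧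
          Real.sqrt (∑' m : ℤ, ‖∑' n : ℤ, ((dker σ L t m n : ℂ) • r n)‖ ^ 2) ≤
            c * L * Real.sqrt (∑' b : ℤ, ‖r b‖ ^ 2) := by
  set P := ∏' i : ℕ, (1 - σ (-(i : ℤ) - t - 2))
  have hPle : ∀ i : ℕ, P ≤ 1 - σ (-(i : ℤ) - t - 2) :=
    tprod_le_of_mem_Icc fun j => ⟨by linarith [(hσ (-(j : ℤ) - t - 2)).2],
      by linarith [(hσ (-(j : ℤ) - t - 2)).1]⟩
  have hP1 : P ≤ 1 := by linarith [hPle 0, (hσ (-((0 : ℕ) : ℤ) - t - 2)).1]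
  have hσP : ∀ n : ℤ, n < 0 → σ (n - t - 1) ≤ 1 - P := fun n hn => by
    have h := hPle (-n - 1).toNat
    rw [show -((-n - 1).toNat : ℤ) - t - 2 = n - t - 1 by omega] at h
    linarith
  refine ⟨P / 16, 160 / (3 * P), by positivity, by positivity, ?_⟩
  intro L hL0 hL r hr
  have hLP : L ^ 2 ≤ P / 16 := by nlinarith
  have hden : ∀ n, P / 2 ≤ 1 - σ (n - t - 1) * KBeDiag L n := fun n =>
    half_le_one_sub_mul_KBeDiag (hσ _).2 (hσP n) hP1 hL0.le hLP
  have hW : HasSum (fun k : ℤ => (1 / 4 : ℝ) ^ k.natAbs) (5 / 3) := by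
    convert hasSum_pow_natAbs (x := 1 / 4) (by norm_num) (by norm_num) using 1; norm_num
  obtain ⟨hrow, hsq, hle⟩ := kernel_operator_bound_of_sq_le_mul (𝕜 := ℂ)
    (sq_dker_le (fun k => abs_le.2 ⟨by linarith [(hσ k).1], (hσ k).2⟩) hL0.le (by linarith)
      (by positivity) hden) (hW.summable.mul_left _) hW.summable hr
  refine ⟨hrow, hsq, ?_⟩
  calc Real.sqrt (∑' m : ℤ, ‖∑' n : ℤ, ((dker σ L t m n : ℂ) • r n)‖ ^ 2)
      ≤ Real.sqrt ((160 / (3 * P) * L) ^ 2 * ∑' b : ℤ, ‖r b‖ ^ 2) := by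
        refine Real.sqrt_le_sqrt (hle.trans_eq ?_)
        rw [tsum_mul_left, hW.tsum_eq]
        field_simp
        ring
    _ = 160 / (3 * P) * L * Real.sqrt (∑' b : ℤ, ‖r b‖ ^ 2) := by
        rw [Real.sqrt_mul (sq_nonneg _), Real.sqrt_sq (by positivity)]

/-- if `∏_{i≥1} (1 - σ(-i-s)) > 0`, there are `L* > 0` and `c > 0` such
that for all `0 < L < L*` and all square-summable `r : ℤ' → ℂ²`, the sums
`(Dr)(a) = ∑_b d(a,b) r(b)` converge absolutely, `Dr` is square-summable, and
`‖Dr‖_{ℓ²} ≤ c L ‖r‖_{ℓ²}`. -/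
theorem dker_operator_small (σ : ℤ → ℝ) (hσ : ∀ k : ℤ, σ k ∈ Set.Icc (0 : ℝ) 1)
    (hsum : Summable (fun k : {k : ℤ // k < 0} => σ k)) (t : ℤ)
    (hQ0 : 0 < ∏' i : ℕ, (1 - σ (-(i : ℤ) - t - 2))) :
    ∃ Lstar c : ℝ, 0 < Lstar ∧ 0 < c ∧
      ∀ L : ℝ, 0 < L → L < Lstar →
        ∀ r : ℤ → EuclideanSpace ℂ (Fin 2), Summable (fun b : ℤ => ‖r b‖ ^ 2) →
          (∀ m : ℤ, Summable (fun n : ℤ => |dker σ L t m n| * ‖r n‖)) ∧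
          Summable (fun m : ℤ => ‖∑' n : ℤ, ((dker σ L t m n : ℂ) • r n)‖ ^ 2) ∧
          Real.sqrt (∑' m : ℤ, ‖∑' n : ℤ, ((dker σ L t m n : ℂ) • r n)‖ ^ 2) ≤
            c * L * Real.sqrt (∑' b : ℤ, ‖r b‖ ^ 2) :=
  dker_operator_small_general σ hσ t hQ0
end
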